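/- arXiv:2412.10125 — 7 statements merged into one kernel-verified Lean document; each statement's English description precedes it below -/
import Mathlib

section
/- Let H be a real Hilbert space, let A₁, A₂ : H → H be bounded non-negative linear operators, let τ > 0, and let B₁, B₂ : H → H be bounded linear operators with Bℓ ∘ (I + τAℓ) = I = (I + τAℓ) ∘ Bℓ for ℓ = 1, 2. Define the Douglas–Rachford splitting operator S := B₂ ∘ B₁ ∘ (I + τ² A₁A₂). Then for every natural number n and every v ∈ H one has ‖Sⁿ(B₂ v)‖ ≤ ‖v‖, i.e. ‖Sⁿ ∘ (I + τA₂)^{-1}‖ ≤ 1. -/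
/-!
Writing `Bℓ = (I + τAℓ)⁻¹`, one has `Sⁿ B₂ = B₂ Tⁿ` with `T = B₁ (I + τ²A₁A₂) B₂`, so it suffices
that `B₂` and `T` are nonexpansive. Both follow from `‖u‖ ≤ ‖u + τa‖` whenever `τ ≥ 0` and
`⟪a, u⟫ ≥ 0`. For `B₂` take `u = B₂x`, `a = A₂u`. For `T`, put `w = B₂x` and `u = Tx`; then
`x = u + τ(b + a)` with `a = A₂w`, `b = A₁(u - τa)`, and `⟪b + a, u⟫ = ⟪b, u - τa⟫ + ⟪a, w⟫ ≥ 0`.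
-/

open scoped InnerProductSpace

section

variable {H : Type*} [NormedAddCommGroup H] [InnerProductSpace ℝ H]

lemma norm_le_norm_add_smul_of_inner_nonneg {u a : H} {τ : ℝ} (hτ : 0 ≤ τ)
    (h : 0 ≤ ⟪a, u⟫_ℝ) : ‖u‖ ≤ ‖u + τ • a‖ := by
  refine le_of_sq_le_sq ?_ (norm_nonneg _)
  have : ‖u + τ • a‖ ^ 2 = ‖u‖ ^ 2 + 2 * τ * ⟪a, u⟫_ℝ + τ ^ 2 * ‖a‖ ^ 2 := by
    rw [norm_add_sq_real, real_inner_smul_right, norm_smul, Real.norm_of_nonneg hτ,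
      real_inner_comm]
    ring
  rw [this]
  nlinarith [mul_nonneg hτ h, sq_nonneg (τ * ‖a‖)]

lemma add_smul_apply_of_comp_eq_one {A B : H →L[ℝ] H} {τ : ℝ}
    (hB : (1 + τ • A).comp B = 1) (x : H) : B x + τ • A (B x) = x :=
  congr($hB x)

lemma norm_apply_le_of_comp_eq_one {A B : H →L[ℝ] H} (hA : ∀ v : H, 0 ≤ ⟪A v, v⟫_ℝ)
    {τ : ℝ} (hτ : 0 ≤ τ) (hB : (1 + τ • A).comp B = 1) (x : H) : ‖B x‖ ≤ ‖x‖ := by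
  conv_rhs => rw [← add_smul_apply_of_comp_eq_one hB x]
  exact norm_le_norm_add_smul_of_inner_nonneg hτ (hA _)

lemma norm_le_norm_add_smul_add_smul {u a b : H} {τ : ℝ} (hτ : 0 ≤ τ)
    (ha : 0 ≤ ⟪a, u + τ • b⟫_ℝ) (hb : 0 ≤ ⟪b, u - τ • a⟫_ℝ) : ‖u‖ ≤ ‖u + τ • b + τ • a‖ := by
  have hinner : ⟪b + a, u⟫_ℝ = ⟪b, u - τ • a⟫_ℝ + ⟪a, u + τ • b⟫_ℝ := by
    simp only [inner_add_left, inner_add_right, inner_sub_right, real_inner_smul_right,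
      real_inner_comm a b]
    ring
  rw [add_assoc, ← smul_add]
  exact norm_le_norm_add_smul_of_inner_nonneg hτ (hinner ▸ add_nonneg hb ha)

lemma norm_douglasRachford_step_le {A₁ A₂ B₁ B₂ : H →L[ℝ] H}
    (hA₁ : ∀ v : H, 0 ≤ ⟪A₁ v, v⟫_ℝ) (hA₂ : ∀ v : H, 0 ≤ ⟪A₂ v, v⟫_ℝ) {τ : ℝ} (hτ : 0 ≤ τ)
    (hB₁ : (1 + τ • A₁).comp B₁ = 1) (hB₂ : (1 + τ • A₂).comp B₂ = 1) (x : H) :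
    ‖B₁ (B₂ x + τ ^ 2 • A₁ (A₂ (B₂ x)))‖ ≤ ‖x‖ := by
  have hx := add_smul_apply_of_comp_eq_one hB₂ x
  have ha := hA₂ (B₂ x)
  generalize B₂ x = w at *
  generalize A₂ w = a at *
  have hu := add_smul_apply_of_comp_eq_one hB₁ (w + τ ^ 2 • A₁ a)
  generalize B₁ (w + τ ^ 2 • A₁ a) = u at *
  have hw : w = u + τ • A₁ (u - τ • a) := by
    rw [map_sub, map_smul, smul_sub, smul_smul, ← sq, ← add_sub_assoc, hu, add_sub_cancel_right]
  have hb := hA₁ (u - τ • a)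
  generalize A₁ (u - τ • a) = b at *
  subst hx hw
  exact norm_le_norm_add_smul_add_smul hτ ha hb

lemma norm_pow_apply_le {T : H →L[ℝ] H} (hT : ∀ x, ‖T x‖ ≤ ‖x‖) (n : ℕ) (x : H) :
    ‖(T ^ n) x‖ ≤ ‖x‖ := by
  induction n with
  | zero => simp
  | succ n ih =>
    rw [pow_succ']
    exact (hT _).trans ih

end

theorem douglasRachford_stability_general
    {H : Type*} [NormedAddCommGroup H] [InnerProductSpace ℝ H]
    (A₁ A₂ B₁ B₂ : H →L[ℝ] H)
    (hA₁ : ∀ v : H, 0 ≤ ⟪A₁ v, v⟫_ℝ) (hA₂ : ∀ v : H, 0 ≤ ⟪A₂ v, v⟫_ℝ)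
    (τ : ℝ) (hτ : 0 < τ)
    (hB₁' : (1 + τ • A₁ : H →L[ℝ] H).comp B₁ = 1)
    (hB₂' : (1 + τ • A₂ : H →L[ℝ] H).comp B₂ = 1) :
    ∀ (n : ℕ) (v : H),
      ‖((B₂.comp (B₁.comp (1 + τ ^ 2 • (A₁.comp A₂)))) ^ n) (B₂ v)‖ ≤ ‖v‖ := by
  intro n v
  set T := B₁.comp ((1 + τ ^ 2 • (A₁.comp A₂)).comp B₂)
  have hT : ∀ x, ‖T x‖ ≤ ‖x‖ :=
    norm_douglasRachford_step_le hA₁ hA₂ hτ.le hB₁' hB₂'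
  have hsemi : SemiconjBy B₂ T (B₂.comp (B₁.comp (1 + τ ^ 2 • (A₁.comp A₂)))) := rfl
  calc ‖((B₂.comp (B₁.comp (1 + τ ^ 2 • (A₁.comp A₂)))) ^ n) (B₂ v)‖
      = ‖B₂ ((T ^ n) v)‖ := congr(‖$((hsemi.pow_right n).eq.symm) v‖)
    _ ≤ ‖(T ^ n) v‖ := norm_apply_le_of_comp_eq_one hA₂ hτ.le hB₂' _
    _ ≤ ‖v‖ := norm_pow_apply_le hT n v

/-- Stability of the Douglas–Rachford splitting scheme: with `Bℓ = (I + τAℓ)⁻¹` and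
`S = B₂ ∘ B₁ ∘ (I + τ²A₁A₂)`, one has `‖Sⁿ (B₂ v)‖ ≤ ‖v‖` for all `n` and `v`. -/
theorem douglasRachford_stability
    {H : Type*} [NormedAddCommGroup H] [InnerProductSpace ℝ H] [CompleteSpace H]
    (A₁ A₂ B₁ B₂ : H →L[ℝ] H)
    (hA₁ : ∀ v : H, 0 ≤ ⟪A₁ v, v⟫_ℝ) (hA₂ : ∀ v : H, 0 ≤ ⟪A₂ v, v⟫_ℝ)
    (τ : ℝ) (hτ : 0 < τ)
    (hB₁ : B₁.comp (1 + τ • A₁) = 1) (hB₁' : (1 + τ • A₁ : H →L[ℝ] H).comp B₁ = 1)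
    (hB₂ : B₂.comp (1 + τ • A₂) = 1) (hB₂' : (1 + τ • A₂ : H →L[ℝ] H).comp B₂ = 1) :
    ∀ (n : ℕ) (v : H),
      ‖((B₂.comp (B₁.comp (1 + τ ^ 2 • (A₁.comp A₂)))) ^ n) (B₂ v)‖ ≤ ‖v‖ :=
  douglasRachford_stability_general A₁ A₂ B₁ B₂ hA₁ hA₂ τ hτ hB₁' hB₂'
end

section
/- Let H be a real Hilbert space, let A₁, A₂ : H → H be bounded linear operators, let τ > 0, and let B₁, B₂ : H → H be bounded linear operators with Bℓ ∘ (I + τAℓ) = I = (I + τAℓ) ∘ Bℓ for ℓ = 1, 2. Define S := B₂ ∘ B₁ ∘ (I + τ² A₁A₂). Then for every natural number n one has the operator identity Sⁿ ∘ B₂ = B₂ ∘ ( (1/2) • (B₁ ∘ (I − τA₁) ∘ (I − τA₂) ∘ B₂) + (1/2) • I )ⁿ. -/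
/-!
Writing `a = τA₁`, `b = τA₂`, the identity `2(1 + ab) = (1 - a)(1 - b) + (1 + a)(1 + b)` splits
`S = B₂B₁(1 + ab)`; the inverses cancel `(1 + a)(1 + b)` against `B₁` and `B₂`, which gives
`S B₂ = B₂ T` with `T = ½ B₁(1 - a)(1 - b)B₂ + ½`, and powers of a semiconjugation are again one.
-/

section

variable {𝕜 R : Type*} [Field 𝕜] [NeZero (2 : 𝕜)] [Ring R] [Algebra 𝕜 R]

theorem one_add_mul_eq_half_smul_add_half_smul (a b : R) :
    1 + a * b = (1 / 2 : 𝕜) • ((1 - a) * (1 - b)) + (1 / 2 : 𝕜) • ((1 + a) * (1 + b)) := by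
  have hsum : (1 - a) * (1 - b) + (1 + a) * (1 + b) = (2 : 𝕜) • (1 + a * b) := by
    rw [two_smul]; noncomm_ring
  rw [← smul_add, hsum, smul_smul, one_div_mul_cancel two_ne_zero, one_smul]

theorem semiconjBy_half_smul_add_half_smul {a b c d : R}
    (hc : c * (1 + a) = 1) (hd : (1 + b) * d = 1) :
    SemiconjBy d ((1 / 2 : 𝕜) • (c * (1 - a) * (1 - b) * d) + (1 / 2 : 𝕜) • 1)
      (d * c * (1 + a * b)) := by
  calc d * ((1 / 2 : 𝕜) • (c * (1 - a) * (1 - b) * d) + (1 / 2 : 𝕜) • 1)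
      = (1 / 2 : 𝕜) • (d * c * ((1 - a) * (1 - b)) * d) +
          (1 / 2 : 𝕜) • (d * (c * (1 + a)) * ((1 + b) * d)) := by
        rw [hc, hd, mul_one, mul_one, mul_add, mul_smul_comm, mul_smul_comm, mul_one]
        simp only [mul_assoc]
    _ = d * c * (1 + a * b) * d := by
        rw [one_add_mul_eq_half_smul_add_half_smul (𝕜 := 𝕜) a b]
        simp only [mul_add, add_mul, mul_smul_comm, smul_mul_assoc, mul_assoc]

end

theorem douglasRachford_pow_reformulation_general
    {H : Type*} [NormedAddCommGroup H] [InnerProductSpace ℝ H]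
    (A₁ A₂ B₁ B₂ : H →L[ℝ] H) (τ : ℝ)
    (hB₁ : B₁ * (1 + τ • A₁) = 1)
    (hB₂' : (1 + τ • A₂) * B₂ = 1) :
    ∀ n : ℕ,
      (B₂ * B₁ * (1 + τ ^ 2 • (A₁ * A₂))) ^ n * B₂ =
        B₂ * (((1 / 2 : ℝ) • (B₁ * (1 - τ • A₁) * (1 - τ • A₂) * B₂) +
          (1 / 2 : ℝ) • (1 : H →L[ℝ] H)) ^ n) := by
  intro n
  have hsq : τ ^ 2 • (A₁ * A₂) = (τ • A₁) * (τ • A₂) := by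
    rw [smul_mul_smul_comm, sq]
  rw [hsq]
  exact ((semiconjBy_half_smul_add_half_smul (𝕜 := ℝ) hB₁ hB₂').pow_right n).eq.symm

/-- Algebraic reformulation of the powers of the Douglas–Rachford splitting operator:
`Sⁿ ∘ B₂ = B₂ ∘ ((1/2) • (B₁ ∘ (I − τA₁) ∘ (I − τA₂) ∘ B₂) + (1/2) • I)ⁿ`, where
`S = B₂ ∘ B₁ ∘ (I + τ²A₁A₂)` and `Bℓ = (I + τAℓ)⁻¹`. -/
theorem douglasRachford_pow_reformulation
    {H : Type*} [NormedAddCommGroup H] [InnerProductSpace ℝ H] [CompleteSpace H]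
    (A₁ A₂ B₁ B₂ : H →L[ℝ] H) (τ : ℝ) (hτ : 0 < τ)
    (hB₁ : B₁ * (1 + τ • A₁) = 1) (hB₁' : (1 + τ • A₁) * B₁ = 1)
    (hB₂ : B₂ * (1 + τ • A₂) = 1) (hB₂' : (1 + τ • A₂) * B₂ = 1) :
    ∀ n : ℕ,
      (B₂ * B₁ * (1 + τ ^ 2 • (A₁ * A₂))) ^ n * B₂ =
        B₂ * (((1 / 2 : ℝ) • (B₁ * (1 - τ • A₁) * (1 - τ • A₂) * B₂) +
          (1 / 2 : ℝ) • (1 : H →L[ℝ] H)) ^ n) :=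
  douglasRachford_pow_reformulation_general A₁ A₂ B₁ B₂ τ hB₁ hB₂'
end

section
/- Let H be a real Hilbert space, let A₁, A₂ : H → H be bounded, self-adjoint, non-negative linear operators that commute (A₁ ∘ A₂ = A₂ ∘ A₁), let τ > 0, and let B₁, B₂ : H → H be bounded linear operators with Bℓ ∘ (I + τAℓ) = I = (I + τAℓ) ∘ Bℓ for ℓ = 1, 2. Then the operator S̃ := B₁ ∘ (I + τ² A₁A₂) ∘ B₂ is self-adjoint, and for every v ∈ H one has 0 ≤ ⟨S̃ v, v⟩ and ⟨S̃ v, v⟩ ≤ ‖v‖²; that is, 0 ≤ S̃ ≤ I in the sense of quadratic forms. -/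
open scoped InnerProductSpace

/-! All operators involved commute, and with `C = 1 + τ²A₁A₂`, `D = τ(A₁ + A₂)` one has
`(1 + τA₁)(1 + τA₂) = C + D`, so `S̃ = C (C + D)⁻¹` is a product of commuting self-adjoint
operators. Writing `v = (C + D) w` gives `⟪S̃ v, v⟫ = ⟪C w, C w + D w⟫`, which lies between `0`
and `‖C w + D w‖²` as soon as `⟪C w, D w⟫ ≥ 0`; and
`⟪C w, A₁ w⟫ = ⟪A₁ w, w⟫ + τ² ⟪A₂ (A₁ w), A₁ w⟫ ≥ 0`, symmetrically for `A₂`. -/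

section InnerProduct

variable {E : Type*} [NormedAddCommGroup E] [InnerProductSpace ℝ E]

theorem real_inner_self_add_nonneg {x y : E} (h : 0 ≤ ⟪x, y⟫_ℝ) : 0 ≤ ⟪x, x + y⟫_ℝ := by
  rw [inner_add_right, real_inner_self_eq_norm_sq]
  positivity

theorem real_inner_self_add_le_norm_add_sq {x y : E} (h : 0 ≤ ⟪x, y⟫_ℝ) :
    ⟪x, x + y⟫_ℝ ≤ ‖x + y‖ ^ 2 := by
  rw [inner_add_right, real_inner_self_eq_norm_sq, norm_add_sq_real]
  nlinarith [sq_nonneg ‖y‖]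

theorem inner_one_add_smul_mul_apply_nonneg {A A' : E →L[ℝ] E}
    (hA : ∀ v, 0 ≤ ⟪A v, v⟫_ℝ) (hA' : ∀ v, 0 ≤ ⟪A' v, v⟫_ℝ) {t : ℝ} (ht : 0 ≤ t) (w : E) :
    0 ≤ ⟪(1 + t • (A * A')) w, A' w⟫_ℝ := by
  simp only [add_apply, one_apply_eq_self, smul_apply, mul_apply_eq_comp, inner_add_left,
    real_inner_smul_left]
  rw [real_inner_comm]
  exact add_nonneg (hA' w) (mul_nonneg ht (hA (A' w)))

theorem real_inner_mul_apply_self_mem_Icc {C D P : E →L[ℝ] E} (hP : (C + D) * P = 1)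
    (hCD : ∀ w, 0 ≤ ⟪C w, D w⟫_ℝ) (v : E) : ⟪(C * P) v, v⟫_ℝ ∈ Set.Icc 0 (‖v‖ ^ 2) := by
  have hv : v = C (P v) + D (P v) := by
    rw [← add_apply, ← mul_apply_eq_comp, hP, one_apply_eq_self]
  rw [mul_apply_eq_comp]
  generalize P v = w at hv ⊢
  subst hv
  exact ⟨real_inner_self_add_nonneg (hCD _), real_inner_self_add_le_norm_add_sq (hCD _)⟩

end InnerProduct

theorem IsSelfAdjoint.of_mul_eq_one {R : Type*} [Monoid R] [StarMul R] {a b : R}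
    (ha : IsSelfAdjoint a) (hba : b * a = 1) (hab : a * b = 1) : IsSelfAdjoint b :=
  letI : Invertible a := ⟨b, hba, hab⟩
  ha.invOf

theorem Commute.of_mul_eq_one_left {R : Type*} [Monoid R] {a b c : R}
    (h : Commute a c) (hba : b * a = 1) (hab : a * b = 1) : Commute b c :=
  letI : Invertible a := ⟨b, hba, hab⟩
  h.invOf_left

section Algebra

variable {R : Type*} [Ring R] [Algebra ℝ R]

theorem Commute.one_add_smul {a b : R} (h : Commute a b) (s t : ℝ) :
    Commute (1 + s • a) (1 + t • b) :=
  (Commute.one_left _).add_left ((Commute.one_right _).add_right ((h.smul_left s).smul_right t))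

theorem IsSelfAdjoint.one_add_smul [StarRing R] [StarModule ℝ R] {a : R} (ha : IsSelfAdjoint a)
    (t : ℝ) : IsSelfAdjoint (1 + t • a) :=
  (IsSelfAdjoint.one R).add ((IsSelfAdjoint.all t).smul ha)

theorem one_add_smul_mul_one_add_smul (t : ℝ) (a b : R) :
    (1 + t • a) * (1 + t • b) = (1 + t ^ 2 • (a * b)) + t • (a + b) := by
  simp only [add_mul, mul_add, one_mul, mul_one, smul_mul_smul_comm, sq, smul_add]
  abel

end Algebra

/-- In the commuting self-adjoint case the symmetrized Douglas–Rachford operator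
`S̃ = B₁ ∘ (I + τ²A₁A₂) ∘ B₂` is self-adjoint with `0 ≤ S̃ ≤ I` in the sense of quadratic
forms. -/
theorem symmetrized_douglasRachford_selfAdjoint_nonneg_le_one
    {H : Type*} [NormedAddCommGroup H] [InnerProductSpace ℝ H] [CompleteSpace H]
    (A₁ A₂ B₁ B₂ : H →L[ℝ] H)
    (hA₁sa : ∀ v w : H, ⟪A₁ v, w⟫_ℝ = ⟪v, A₁ w⟫_ℝ)
    (hA₂sa : ∀ v w : H, ⟪A₂ v, w⟫_ℝ = ⟪v, A₂ w⟫_ℝ)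
    (hA₁ : ∀ v : H, 0 ≤ ⟪A₁ v, v⟫_ℝ) (hA₂ : ∀ v : H, 0 ≤ ⟪A₂ v, v⟫_ℝ)
    (hcomm : A₁ * A₂ = A₂ * A₁) (τ : ℝ) (hτ : 0 < τ)
    (hB₁ : B₁ * (1 + τ • A₁) = 1) (hB₁' : (1 + τ • A₁) * B₁ = 1)
    (hB₂ : B₂ * (1 + τ • A₂) = 1) (hB₂' : (1 + τ • A₂) * B₂ = 1) :
    (∀ v w : H, ⟪(B₁ * (1 + τ ^ 2 • (A₁ * A₂)) * B₂) v, w⟫_ℝ =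
        ⟪v, (B₁ * (1 + τ ^ 2 • (A₁ * A₂)) * B₂) w⟫_ℝ) ∧
      (∀ v : H, 0 ≤ ⟪(B₁ * (1 + τ ^ 2 • (A₁ * A₂)) * B₂) v, v⟫_ℝ) ∧
      (∀ v : H, ⟪(B₁ * (1 + τ ^ 2 • (A₁ * A₂)) * B₂) v, v⟫_ℝ ≤ ‖v‖ ^ 2) := by
  set C : H →L[ℝ] H := 1 + τ ^ 2 • (A₁ * A₂)
  set D : H →L[ℝ] H := τ • (A₁ + A₂)
  have hA₁sa' : IsSelfAdjoint A₁ := ContinuousLinearMap.isSelfAdjoint_iff_isSymmetric.mpr hA₁sa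
  have hA₂sa' : IsSelfAdjoint A₂ := ContinuousLinearMap.isSelfAdjoint_iff_isSymmetric.mpr hA₂sa
  have hcomm' : Commute A₁ A₂ := hcomm
  have hB₁B₂ : Commute B₁ B₂ :=
    (((hcomm'.one_add_smul τ τ).of_mul_eq_one_left hB₁ hB₁').symm.of_mul_eq_one_left hB₂ hB₂').symm
  have hB₁C : Commute B₁ C :=
    (((Commute.refl A₁).mul_right hcomm').one_add_smul τ (τ ^ 2)).of_mul_eq_one_left hB₁ hB₁'
  have hB₂C : Commute B₂ C :=
    ((hcomm'.symm.mul_right (Commute.refl A₂)).one_add_smul τ (τ ^ 2)).of_mul_eq_one_left hB₂ hB₂'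
  have hB₁sa : IsSelfAdjoint B₁ := (hA₁sa'.one_add_smul τ).of_mul_eq_one hB₁ hB₁'
  have hB₂sa : IsSelfAdjoint B₂ := (hA₂sa'.one_add_smul τ).of_mul_eq_one hB₂ hB₂'
  have hCsa : IsSelfAdjoint C := ((hA₁sa'.commute_iff hA₂sa').mp hcomm').one_add_smul (τ ^ 2)
  have hSsa : IsSelfAdjoint (B₁ * C * B₂) :=
    (((hB₁sa.commute_iff hCsa).mp hB₁C).commute_iff hB₂sa).mp (hB₁B₂.mul_left hB₂C.symm)
  have hinv : (C + D) * (B₁ * B₂) = 1 := by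
    rw [← one_add_smul_mul_one_add_smul, hB₁B₂.eq, mul_assoc, ← mul_assoc _ B₂, hB₂', one_mul,
      hB₁']
  have hCD : ∀ w, 0 ≤ ⟪C w, D w⟫_ℝ := fun w => by
    have h₁ := inner_one_add_smul_mul_apply_nonneg hA₂ hA₁ (sq_nonneg τ) w
    have h₂ := inner_one_add_smul_mul_apply_nonneg hA₁ hA₂ (sq_nonneg τ) w
    rw [← hcomm] at h₁
    simp only [D, smul_apply, add_apply, real_inner_smul_right, inner_add_right]
    exact mul_nonneg hτ.le (add_nonneg h₁ h₂)
  have hS : B₁ * C * B₂ = C * (B₁ * B₂) := by rw [hB₁C.eq, mul_assoc]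
  have hbounds := real_inner_mul_apply_self_mem_Icc hinv hCD
  exact ⟨ContinuousLinearMap.isSelfAdjoint_iff_isSymmetric.mp hSsa, fun v => hS ▸ (hbounds v).1,
    fun v => hS ▸ (hbounds v).2⟩
end

section
/- For every natural number m ≥ 1 and every real number λ with 0 ≤ λ ≤ 1, one has |exp(−m(1 − λ)) − λ^m| ≤ 1/m. -/
/-!
With `x = 1 - λ` we have `exp(-m x) - λ^m = a^m - λ^m` for `a = exp(-x)`, and
`0 ≤ a - λ ≤ x² / 2`. The mean value bound `a^m - λ^m ≤ m a^(m-1) (a - λ)` then gives at most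
`m x² exp(-(m-1) x) / 2`, and this is `≤ 1/m` because `(m x)² ≤ ((m-1) x + 1)² ≤ 2 exp((m-1) x)`.
-/

open Real

theorem exp_neg_le_one_sub_add_sq_div_two {x : ℝ} (hx : 0 ≤ x) :
    exp (-x) ≤ 1 - x + x ^ 2 / 2 := by
  have hcubic : 1 + x + x ^ 2 / 2 + x ^ 3 / 6 ≤ exp x := by
    simpa [Finset.sum_range_succ, Nat.factorial] using sum_le_exp_of_nonneg hx 4
  rw [exp_neg, inv_le_iff_one_le_mul₀ (exp_pos x)]
  -- `(1 - x + x²/2)(1 + x + x²/2 + x³/6) = 1 + x³/6 + x⁴/12 + x⁵/12`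
  nlinarith [mul_le_mul_of_nonneg_left hcubic (by nlinarith : (0 : ℝ) ≤ 1 - x + x ^ 2 / 2),
    pow_nonneg hx 3, pow_nonneg hx 4, pow_nonneg hx 5]

theorem add_one_sq_le_two_mul_exp {y : ℝ} (hy : 0 ≤ y) : (y + 1) ^ 2 ≤ 2 * exp y := by
  nlinarith [quadratic_le_exp_of_nonneg hy]

theorem add_one_mul_sq_le_two_mul_exp {k x : ℝ} (hk : 0 ≤ k) (hx₀ : 0 ≤ x) (hx₁ : x ≤ 1) :
    ((k + 1) * x) ^ 2 ≤ 2 * exp (k * x) :=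
  calc ((k + 1) * x) ^ 2 ≤ (k * x + 1) ^ 2 := by gcongr; linarith
    _ ≤ 2 * exp (k * x) := add_one_sq_le_two_mul_exp (by positivity)

/-- For every `m ≥ 1` and `λ ∈ [0, 1]`, one has `|exp(−m(1 − λ)) − λ^m| ≤ 1/m`. -/
theorem abs_exp_sub_pow_le (m : ℕ) (hm : 1 ≤ m) (lam : ℝ) (h0 : 0 ≤ lam) (h1 : lam ≤ 1) :
    |Real.exp (-(m : ℝ) * (1 - lam)) - lam ^ m| ≤ 1 / m := by
  obtain ⟨k, rfl⟩ : ∃ k, m = k + 1 := ⟨m - 1, by omega⟩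
  set x := 1 - lam with hx
  have hx₀ : 0 ≤ x := by linarith
  have hle : lam ≤ exp (-x) := by linarith [add_one_le_exp (-x)]
  have hgap : exp (-x) - lam ≤ x ^ 2 / 2 := by linarith [exp_neg_le_one_sub_add_sq_div_two hx₀]
  have hpow (n : ℕ) : exp (-x) ^ n = exp (-(n * x)) := by rw [← exp_nat_mul, mul_neg]
  calc |exp (-((k + 1 : ℕ) : ℝ) * x) - lam ^ (k + 1)|
      = |exp (-x) ^ (k + 1) - lam ^ (k + 1)| := by rw [hpow, neg_mul]
    _ ≤ |exp (-x) - lam| * (k + 1 : ℕ) * max |exp (-x)| |lam| ^ k := abs_pow_sub_pow_le ..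
    _ = (exp (-x) - lam) * (k + 1) * exp (-(k * x)) := by
        rw [abs_of_nonneg (by linarith), abs_of_pos (exp_pos _), abs_of_nonneg h0,
          max_eq_left hle, hpow]; push_cast; ring
    _ ≤ x ^ 2 / 2 * (k + 1) * exp (-(k * x)) := by gcongr
    _ = ((k + 1) * x) ^ 2 / (2 * exp (k * x)) / (k + 1) := by
        rw [exp_neg]; field_simp
    _ ≤ 1 / ((k + 1 : ℕ) : ℝ) := by
        push_cast
        gcongr
        rw [div_le_one (by positivity)]
        exact add_one_mul_sq_le_two_mul_exp (by positivity) hx₀ (by linarith)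
end

section
/- Let H be a complex Hilbert space and T : H → H a bounded self-adjoint linear operator such that both T and I − T are positive (i.e. ⟨Tv, v⟩ ≥ 0 and ⟨(I − T)v, v⟩ ≥ 0 for all v). Then for every natural number m ≥ 1, ‖exp(−m • (I − T)) − T^m‖ ≤ 1/m, where exp denotes the operator exponential and the norm is the operator norm. -/
/-!
Write `s = 1 - x` for `x ∈ [0, 1]`. Then `0 ≤ e^{-s} - x ≤ s²/2`, and comparing `m`-th powers gives
`|e^{-ms} - x^m| ≤ m e^{-(m-1)s} s²/2 = e^s (ms)² e^{-ms} / (2m) ≤ e · 4e^{-2} / (2m) < 1/m`,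
using `t² e^{-t} ≤ 4e^{-2}`. Since `0 ≤ T ≤ 1`, the spectrum of `T` lies in `[0, 1]`, and the
continuous functional calculus turns this scalar bound into the operator-norm bound.
-/

open scoped InnerProductSpace

namespace Real

lemma exp_neg_le_one_sub_add_sq_div_two {s : ℝ} (hs : 0 ≤ s) : exp (-s) ≤ 1 - s + s ^ 2 / 2 := by
  rw [exp_neg, inv_le_iff_one_le_mul₀ (exp_pos s)]
  calc 1 ≤ (1 - s + s ^ 2 / 2) * (1 + s + s ^ 2 / 2) := by nlinarith [sq_nonneg (s ^ 2)]
    _ ≤ (1 - s + s ^ 2 / 2) * exp s := by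
      gcongr
      · nlinarith [sq_nonneg (s - 1)]
      · exact quadratic_le_exp_of_nonneg hs

lemma sq_mul_exp_neg_le {t : ℝ} (ht : 0 ≤ t) : t ^ 2 * exp (-t) ≤ 4 * exp (-2) := by
  have h := mul_exp_neg_le_exp_neg_one (t / 2)
  calc t ^ 2 * exp (-t) = 4 * (t / 2 * exp (-(t / 2))) ^ 2 := by
        rw [mul_pow, ← exp_nat_mul]; ring_nf
    _ ≤ 4 * exp (-1) ^ 2 := by gcongr
    _ = 4 * exp (-2) := by rw [← exp_nat_mul]; norm_num

lemma abs_exp_neg_mul_one_sub_sub_pow_le {x : ℝ} (hx₀ : 0 ≤ x) (hx₁ : x ≤ 1) (m : ℕ) :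
    |exp (-m * (1 - x)) - x ^ m| ≤ 1 / m := by
  obtain _ | n := m
  · simp
  set s := 1 - x with hs
  have hs₀ : 0 ≤ s := by linarith
  have hx : x ≤ exp (-s) := by simpa [hs] using one_sub_le_exp_neg s
  have hsub : |exp (-s) - x| ≤ s ^ 2 / 2 := by
    rw [abs_of_nonneg (by linarith)]
    linarith [exp_neg_le_one_sub_add_sq_div_two hs₀]
  have hm : (0 : ℝ) < n + 1 := by positivity
  have hsq_exp : ((n + 1) * s) ^ 2 * exp (-(n * s)) ≤ 2 := by
    calc ((n + 1) * s) ^ 2 * exp (-(n * s))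
        = ((n + 1) * s) ^ 2 * exp (-((n + 1) * s)) * exp s := by
          rw [mul_assoc, ← exp_add]; ring_nf
      _ ≤ 4 * exp (-2) * exp 1 := by
          gcongr ?_ * exp ?_
          · exact sq_mul_exp_neg_le (by positivity)
          · linarith
      _ = 4 * exp (-1) := by rw [mul_assoc, ← exp_add]; norm_num
      _ ≤ 2 := by linarith [exp_neg_one_lt_half]
  have hmax : max |exp (-s)| |x| = exp (-s) := by
    rw [abs_of_nonneg hx₀, abs_of_pos (exp_pos _), max_eq_left hx]
  calc |exp (-↑(n + 1) * s) - x ^ (n + 1)|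
      = |exp (-s) ^ (n + 1) - x ^ (n + 1)| := by rw [← exp_nat_mul, neg_mul_comm]
    _ ≤ |exp (-s) - x| * ↑(n + 1) * max |exp (-s)| |x| ^ n := by
        simpa using abs_pow_sub_pow_le (exp (-s)) x (n + 1)
    _ ≤ s ^ 2 / 2 * (n + 1) * exp (-(n * s)) := by
        rw [hmax, ← exp_nat_mul, mul_neg]; push_cast; gcongr
    _ ≤ 1 / ↑(n + 1) := by
        push_cast
        rw [le_div_iff₀ hm]
        nlinarith [hsq_exp]

end Real

section CStarAlgebra

variable {A : Type*} [CStarAlgebra A]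

lemma exp_smul_one_sub_eq_cfc {a : A} (ha : IsSelfAdjoint a) (r : ℝ) :
    NormedSpace.exp (r • (1 - a)) = cfc (fun x : ℝ ↦ Real.exp (r * (1 - x))) a := by
  rw [cfc_comp' Real.exp (fun x : ℝ ↦ r * (1 - x)) a, CFC.real_exp_eq_normedSpace_exp,
    cfc_const_mul r (fun x : ℝ ↦ 1 - x) a, cfc_sub (fun _ ↦ 1) (fun x ↦ x) a, cfc_const_one ℝ a,
    cfc_id' ℝ a]

variable [PartialOrder A] [StarOrderedRing A]

lemma spectrum_subset_Icc_of_nonneg_of_le_one {a : A} (ha₀ : 0 ≤ a) (ha₁ : a ≤ 1) :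
    spectrum ℝ a ⊆ Set.Icc 0 1 := by
  intro x hx
  refine ⟨spectrum_nonneg_of_nonneg ha₀ hx, ?_⟩
  exact (le_algebraMap_iff_spectrum_le (r := (1 : ℝ))).mp (by simpa using ha₁) x hx

lemma norm_exp_neg_smul_one_sub_sub_pow_le {a : A} (ha₀ : 0 ≤ a) (ha₁ : a ≤ 1) (m : ℕ) :
    ‖NormedSpace.exp ((-m : ℝ) • (1 - a)) - a ^ m‖ ≤ 1 / m := by
  have ha : IsSelfAdjoint a := ha₀.isSelfAdjoint
  rw [exp_smul_one_sub_eq_cfc ha, ← cfc_pow_id (R := ℝ) a m, ← cfc_sub _ _ a]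
  refine norm_cfc_le (by positivity) fun x hx ↦ ?_
  obtain ⟨hx₀, hx₁⟩ := spectrum_subset_Icc_of_nonneg_of_le_one ha₀ ha₁ hx
  exact Real.abs_exp_neg_mul_one_sub_sub_pow_le hx₀ hx₁ m

end CStarAlgebra

theorem norm_exp_sub_pow_le_general
    {H : Type*} [NormedAddCommGroup H] [InnerProductSpace ℂ H] [CompleteSpace H]
    (T : H →L[ℂ] H) (hT : IsSelfAdjoint T)
    (hpos : ∀ v : H, 0 ≤ (⟪T v, v⟫_ℂ).re)
    (hpos' : ∀ v : H, 0 ≤ (⟪(1 - T : H →L[ℂ] H) v, v⟫_ℂ).re)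
    (m : ℕ) :
    ‖NormedSpace.exp (-(m : ℂ) • (1 - T : H →L[ℂ] H)) - T ^ m‖ ≤ 1 / m := by
  have hT₀ : 0 ≤ T := by
    rw [ContinuousLinearMap.nonneg_iff_isPositive]
    exact ⟨hT.isSymmetric, hpos⟩
  have hT₁ : T ≤ 1 := by
    rw [← sub_nonneg, ContinuousLinearMap.nonneg_iff_isPositive]
    exact ⟨((IsSelfAdjoint.one _).sub hT).isSymmetric, hpos'⟩
  have hsmul : -(m : ℂ) • (1 - T) = (-m : ℝ) • (1 - T) := by
    rw [← Complex.coe_smul]; push_cast; rfl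
  rw [hsmul]
  exact norm_exp_neg_smul_one_sub_sub_pow_le hT₀ hT₁ m

/-- If `T` is a bounded self-adjoint operator on a complex Hilbert space with both `T` and
`I − T` positive, then `‖exp(−m • (I − T)) − T^m‖ ≤ 1/m` for every `m ≥ 1`. -/
theorem norm_exp_sub_pow_le
    {H : Type*} [NormedAddCommGroup H] [InnerProductSpace ℂ H] [CompleteSpace H]
    (T : H →L[ℂ] H) (hT : IsSelfAdjoint T)
    (hpos : ∀ v : H, 0 ≤ (⟪T v, v⟫_ℂ).re)
    (hpos' : ∀ v : H, 0 ≤ (⟪(1 - T : H →L[ℂ] H) v, v⟫_ℂ).re)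
    (m : ℕ) (hm : 1 ≤ m) :
    ‖NormedSpace.exp (-(m : ℂ) • (1 - T : H →L[ℂ] H)) - T ^ m‖ ≤ 1 / m :=
  norm_exp_sub_pow_le_general T hT hpos hpos' m
end

section
/- Let H be a complex Hilbert space and let A : H → H be a bounded self-adjoint linear operator that is coercive, i.e. there exists c > 0 with ⟨Av, v⟩ ≥ c‖v‖² for all v ∈ H (so that A is positive and invertible, with inverse A^{-1}). For ζ ∈ [0, 1] let A^{−ζ} denote the fractional power of A defined by the continuous functional calculus (applying the function x ↦ x^{−ζ} to A). Then for every bounded linear operator B : H → H, ‖B ∘ A^{−ζ}‖ ≤ ‖B ∘ A^{-1}‖^{ζ} · ‖B‖^{1−ζ}. -/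
/-! With `L = log A`, the entire function `z ↦ B * exp (-z L)` takes the value `B A^{-ζ}` at
`z = ζ`. Its norm depends only on `re z`, since `exp (-i s L)` is unitary; hence it is bounded on
the strip `0 ≤ re z ≤ 1`, has norm `‖B‖` on the line `re z = 0` and `‖B A⁻¹‖` on the line
`re z = 1`, and Hadamard's three-lines theorem interpolates between the two lines. -/

open scoped InnerProductSpace
open NormedSpace Complex HadamardThreeLines

namespace ContinuousLinearMap

variable {E : Type*} [NormedAddCommGroup E] [InnerProductSpace ℂ E] [CompleteSpace E]
  {T : E →L[ℂ] E} {c : ℝ}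

lemma algebraMap_le_of_le_re_inner (hT : IsSelfAdjoint T)
    (h : ∀ v, c * ‖v‖ ^ 2 ≤ (⟪T v, v⟫_ℂ).re) : algebraMap ℝ (E →L[ℂ] E) c ≤ T := by
  rw [le_def, isPositive_def']
  refine ⟨hT.sub (.algebraMap _ (.all c)), fun v => ?_⟩
  have hv : (⟪c • v, v⟫_ℂ).re = c * ‖v‖ ^ 2 := by
    rw [← Complex.coe_smul, inner_smul_left, Complex.conj_ofReal, Complex.re_ofReal_mul,
      ← RCLike.re_to_complex, inner_self_eq_norm_sq]
  simpa [reApplyInnerSelf, Algebra.algebraMap_eq_smul_one, inner_sub_left, hv] using h v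

lemma isStrictlyPositive_of_le_re_inner (hT : IsSelfAdjoint T) (hc : 0 < c)
    (h : ∀ v, c * ‖v‖ ^ 2 ≤ (⟪T v, v⟫_ℂ).re) : IsStrictlyPositive T := by
  have hspec := (algebraMap_le_iff_le_spectrum hT).mp (algebraMap_le_of_le_re_inner hT h)
  exact (StarOrderedRing.isStrictlyPositive_iff_spectrum_pos T hT).mpr
    fun x hx => hc.trans_le (hspec x hx)

end ContinuousLinearMap

namespace CFC

variable {A : Type*} [CStarAlgebra A] [PartialOrder A] [StarOrderedRing A]

lemma exp_smul_log {a : A} (ha : IsStrictlyPositive a) (t : ℝ) : exp (t • log a) = a ^ t := by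
  have hpos : ∀ x ∈ spectrum ℝ a, 0 < x := fun x hx => ha.spectrum_pos hx
  have hlog : ContinuousOn Real.log (spectrum ℝ a) :=
    Real.continuousOn_log.mono fun x hx => (hpos x hx).ne'
  rw [log, ← cfc_smul t Real.log a, ← real_exp_eq_normedSpace_exp,
    ← cfc_comp' Real.exp (fun x => t • Real.log x) a (by fun_prop) (hlog.const_smul t),
    rpow_eq_cfc_real]
  refine cfc_congr fun x hx => ?_
  simp [Real.rpow_def_of_pos (hpos x hx), mul_comm]

end CFC

section ThreeLines

variable {A : Type*} [CStarAlgebra A]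

lemma norm_mul_exp_smul_eq_norm_mul_exp_re_smul (b : A) {m : A} (hm : IsSelfAdjoint m) (z : ℂ) :
    ‖b * exp (z • m)‖ = ‖b * exp (z.re • m)‖ := by
  let +nondep : NormedAlgebra ℚ A := .restrictScalars ℚ ℂ A
  have hsplit : z • m = z.re • m + I • (z.im • m) := by
    conv_lhs => rw [← Complex.re_add_im z]
    rw [add_smul, mul_comm, mul_smul, Complex.coe_smul, Complex.coe_smul]
  have hcomm : Commute (z.re • m) (I • z.im • m) :=
    (((Commute.refl m).smul_left _).smul_right _).smul_right _
  rw [hsplit, exp_add_of_commute hcomm, ← mul_assoc]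
  exact CStarRing.norm_mul_mem_unitary _
    (selfAdjoint.expUnitary ⟨_, (IsSelfAdjoint.all z.im).smul hm⟩).prop

theorem norm_mul_exp_smul_le (b : A) {m : A} (hm : IsSelfAdjoint m) {t : ℝ} (ht₀ : 0 ≤ t)
    (ht₁ : t ≤ 1) : ‖b * exp (t • m)‖ ≤ ‖b‖ ^ (1 - t) * ‖b * exp m‖ ^ t := by
  let +nondep : NormedAlgebra ℚ A := .restrictScalars ℚ ℂ A
  set f : ℂ → A := fun z => b * exp (z • m)
  have hf : ∀ z, ‖f z‖ = ‖b * exp (z.re • m)‖ := norm_mul_exp_smul_eq_norm_mul_exp_re_smul b hm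
  have hdiff : Differentiable ℂ f := fun z =>
    ((hasDerivAt_exp_smul_const m z).differentiableAt.const_mul b)
  have hbdd : BddAbove ((norm ∘ f) '' verticalClosedStrip 0 1) := by
    refine ((isCompact_Icc (a := (0 : ℝ)) (b := 1)).bddAbove_image
      (f := fun s : ℝ => ‖b * exp (s • m)‖) (by fun_prop)).mono ?_
    rintro - ⟨z, hz, rfl⟩
    exact ⟨z.re, hz, (hf z).symm⟩
  have hmain := norm_le_interp_of_mem_verticalClosedStrip' (f := f) zero_lt_one
    (z := t) (a := ‖b‖) (b := ‖b * exp m‖) (by simpa [verticalClosedStrip] using ⟨ht₀, ht₁⟩)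
    hdiff.diffContOnCl hbdd (fun z hz => by simp_all [f]) (fun z hz => by simp_all [f])
  simpa [f] using hmain

end ThreeLines

theorem interpolation_fractional_power_bound_general
    {H : Type*} [NormedAddCommGroup H] [InnerProductSpace ℂ H] [CompleteSpace H]
    (A Ainv B : H →L[ℂ] H) (hA : IsSelfAdjoint A)
    (c : ℝ) (hc : 0 < c) (hcoer : ∀ v : H, c * ‖v‖ ^ 2 ≤ (⟪A v, v⟫_ℂ).re)
    (hinv₁ : Ainv * A = 1)
    (ζ : ℝ) (hζ0 : 0 ≤ ζ) (hζ1 : ζ ≤ 1) :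
    ‖B * cfc (fun x : ℝ => x ^ (-ζ)) A‖ ≤ ‖B * Ainv‖ ^ ζ * ‖B‖ ^ (1 - ζ) := by
  have hApos : IsStrictlyPositive A := A.isStrictlyPositive_of_le_re_inner hA hc hcoer
  have hpow (t : ℝ) : cfc (fun x : ℝ => x ^ (-t)) A = exp (t • -CFC.log A) := by
    rw [smul_neg, ← neg_smul, CFC.exp_smul_log hApos, CFC.rpow_eq_cfc_real]
  have hAinv : Ainv = exp (-CFC.log A) := by
    rw [left_inv_eq_right_inv hinv₁ (Ring.mul_inverse_cancel A hApos.isUnit),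
      CFC.inverse_eq_rpow_neg_one, ← one_smul ℝ (-CFC.log A), ← hpow 1, CFC.rpow_eq_cfc_real]
  rw [hpow, hAinv, mul_comm (_ ^ ζ)]
  exact norm_mul_exp_smul_le B IsSelfAdjoint.log.neg hζ0 hζ1

/-- Interpolation (moment) inequality: if `A` is a bounded self-adjoint coercive operator on a
complex Hilbert space with bounded inverse `Ainv`, and `A^{−ζ}` is defined via the continuous
functional calculus, then `‖B ∘ A^{−ζ}‖ ≤ ‖B ∘ A⁻¹‖^ζ · ‖B‖^{1−ζ}` for every bounded `B` and
`ζ ∈ [0, 1]`. -/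
theorem interpolation_fractional_power_bound
    {H : Type*} [NormedAddCommGroup H] [InnerProductSpace ℂ H] [CompleteSpace H]
    (A Ainv B : H →L[ℂ] H) (hA : IsSelfAdjoint A)
    (c : ℝ) (hc : 0 < c) (hcoer : ∀ v : H, c * ‖v‖ ^ 2 ≤ (⟪A v, v⟫_ℂ).re)
    (hinv₁ : Ainv * A = 1) (hinv₂ : A * Ainv = 1)
    (ζ : ℝ) (hζ0 : 0 ≤ ζ) (hζ1 : ζ ≤ 1) :
    ‖B * cfc (fun x : ℝ => x ^ (-ζ)) A‖ ≤ ‖B * Ainv‖ ^ ζ * ‖B‖ ^ (1 - ζ) :=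
  interpolation_fractional_power_bound_general A Ainv B hA c hc hcoer hinv₁ ζ hζ0 hζ1
end

section
/- Let H be a real Hilbert space, let A : H → H be a bounded non-negative linear operator, and let t ≥ 0. Then for every v ∈ H, ‖exp(−t • A) v + t · A(exp(−t • A) v) − v‖ ≤ (t²/2) · ‖A(Av)‖. -/
/-!
The remainder `R(s) = e^{-sA} v + s A e^{-sA} v - v` vanishes at `s = 0` and has derivative
`-s e^{-sA} A² v`. Non-negativity of `A` makes `s ↦ ‖e^{-sA} w‖²` non-increasing (its derivative
is `-2 ⟪A e^{-sA} w, e^{-sA} w⟫`), so `‖R'(s)‖ ≤ s ‖A² v‖` for `s ≥ 0`, and comparing `‖R‖` with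
`s ↦ s²/2 · ‖A² v‖` by the fencing form of the mean value inequality gives the bound.
-/

open scoped InnerProductSpace

open NormedSpace Set

namespace ContinuousLinearMap

section Banach

variable {E : Type*} [NormedAddCommGroup E] [NormedSpace ℝ E]

theorem exp_apply_comm {A B : E →L[ℝ] E} (h : Commute A B) (w : E) :
    exp B (A w) = A (exp B w) :=
  congr($(h.exp_right.eq.symm) w)

variable [CompleteSpace E]

theorem hasDerivAt_exp_smul_apply (B : E →L[ℝ] E) (v : E) (r : ℝ) :
    HasDerivAt (fun s : ℝ ↦ exp (s • B) v) (B (exp (r • B) v)) r :=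
  (apply ℝ E v).hasFDerivAt.comp_hasDerivAt r (hasDerivAt_exp_smul_const' B r)

theorem hasDerivAt_exp_smul_neg_taylor (A : E →L[ℝ] E) (v : E) (r : ℝ) :
    HasDerivAt (fun s : ℝ ↦ exp (s • -A) v + s • A (exp (s • -A) v) - v)
      (-(r • exp (r • -A) (A (A v)))) r := by
  have hu := hasDerivAt_exp_smul_apply (-A) v r
  have hAu := A.hasFDerivAt.comp_hasDerivAt r hu
  refine ((hu.add ((hasDerivAt_id r).smul hAu)).sub_const v).congr_deriv ?_
  have hcomm : Commute A (r • -A) := ((Commute.refl A).neg_right).smul_right r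
  rw [exp_apply_comm hcomm, exp_apply_comm hcomm]
  simp only [Function.comp_apply, id, neg_apply, map_neg, smul_neg, one_smul]
  abel

end Banach

section Hilbert

variable {H : Type*} [NormedAddCommGroup H] [InnerProductSpace ℝ H] [CompleteSpace H]

theorem antitone_norm_exp_smul_neg_apply {A : H →L[ℝ] H} (hA : ∀ v : H, 0 ≤ ⟪A v, v⟫_ℝ)
    (w : H) : Antitone fun s : ℝ ↦ ‖exp (s • -A) w‖ := by
  set u : ℝ → H := fun s ↦ exp (s • -A) w
  have hsq : ∀ s, HasDerivAt (fun s ↦ ‖u s‖ ^ 2) (-(2 * ⟪A (u s), u s⟫_ℝ)) s := fun s ↦ by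
    convert (hasDerivAt_exp_smul_apply (-A) w s).norm_sq using 1
    simp only [u, neg_apply, inner_neg_right, real_inner_comm, mul_neg]
  have hsq_anti : Antitone fun s ↦ ‖u s‖ ^ 2 :=
    antitone_of_deriv_nonpos (fun s ↦ (hsq s).differentiableAt) fun s ↦ by
      rw [(hsq s).deriv]
      linarith [hA (u s)]
  intro s s' hss'
  exact (pow_le_pow_iff_left₀ (norm_nonneg _) (norm_nonneg _) two_ne_zero).mp (hsq_anti hss')

theorem norm_exp_smul_neg_apply_le {A : H →L[ℝ] H} (hA : ∀ v : H, 0 ≤ ⟪A v, v⟫_ℝ)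
    {r : ℝ} (hr : 0 ≤ r) (w : H) : ‖exp (r • -A) w‖ ≤ ‖w‖ := by
  simpa using antitone_norm_exp_smul_neg_apply hA w hr

end Hilbert

end ContinuousLinearMap

/-- Second-order Taylor bound for the semigroup generated by a bounded non-negative operator:
`‖exp(−tA)v + t·A(exp(−tA)v) − v‖ ≤ (t²/2)·‖A(Av)‖` for `t ≥ 0`. -/
theorem exp_neg_nonneg_second_order_bound
    {H : Type*} [NormedAddCommGroup H] [InnerProductSpace ℝ H] [CompleteSpace H]
    (A : H →L[ℝ] H) (hA : ∀ v : H, 0 ≤ ⟪A v, v⟫_ℝ) (t : ℝ) (ht : 0 ≤ t) :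
    ∀ v : H,
      ‖NormedSpace.exp (-(t • A)) v + t • A (NormedSpace.exp (-(t • A)) v) - v‖ ≤
        t ^ 2 / 2 * ‖A (A v)‖ := by
  intro v
  have hremainder := ContinuousLinearMap.hasDerivAt_exp_smul_neg_taylor A v
  have hbound : ∀ s ∈ Ico 0 t, ‖-(s • exp (s • -A) (A (A v)))‖ ≤ s * ‖A (A v)‖ := fun s hs ↦ by
    rw [norm_neg, norm_smul, Real.norm_of_nonneg hs.1]
    exact mul_le_mul_of_nonneg_left
      (ContinuousLinearMap.norm_exp_smul_neg_apply_le hA hs.1 _) hs.1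
  have hquad : ∀ s : ℝ, HasDerivAt (fun s ↦ s ^ 2 / 2 * ‖A (A v)‖) (s * ‖A (A v)‖) s := fun s ↦ by
    refine (((hasDerivAt_pow 2 s).div_const 2).mul_const _).congr_deriv ?_
    push_cast
    ring
  rw [← smul_neg]
  exact image_norm_le_of_norm_deriv_right_le_deriv_boundary
    (fun s _ ↦ (hremainder s).continuousAt.continuousWithinAt)
    (fun s _ ↦ (hremainder s).hasDerivWithinAt) (by simp) hquad hbound ⟨ht, le_rfl⟩
end
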